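/- Let $(\tilde\alpha(k))_{k\ge 1}$ be a sequence in $[0,1]$ and $Y$ a nonnegative integrable random variable with quantile function $Q_Y$. Then $\sum_{k\ge 1} k^{-1/2} \int_0^{\tilde\alpha(k)} \frac{Q_Y(u)}{\sqrt{u}}\,du < \infty$ if and only if $\sum_{k\ge 1} k^{-1/2} \int_0^{\infty} \min(\sqrt{\tilde\alpha(k)}, \sqrt{\mathbb{P}(Y>t)})\,dt < \infty$. -/

import Mathlib

/-!
For `a ≥ 0`, the layer-cake formula with exponent `1/2` gives
`∫_{t>0} √(min a (H t)) dt = (1/2) ∫_{u>0} λ{t > 0 | u < min a (H t)} u^(-1/2) du`,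
and for `0 < u < a` that set is `(0, Q u)` because the tail `H` is antitone and right-continuous.
Hence `∫_{t>0} min (√a) (√(H t)) dt = (1/2) ∫_0^a Q u / √u du`, and the two series differ
termwise by the factor `1/2`.
-/

open MeasureTheory Set Filter Topology ProbabilityTheory

section Tail

variable {Ω : Type*} [MeasurableSpace Ω] (μ : Measure Ω) [IsProbabilityMeasure μ] {Y : Ω → ℝ}

lemma toReal_measure_gt_eq_one_sub_cdf (hY : Measurable Y) (t : ℝ) :
    (μ {ω | Y ω > t}).toReal = 1 - cdf (μ.map Y) t := by
  have hcompl : {ω | Y ω > t} = (Y ⁻¹' Iic t)ᶜ := by ext; simp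
  have := Measure.isProbabilityMeasure_map (μ := μ) hY.aemeasurable
  rw [cdf_eq_real, map_measureReal_apply hY measurableSet_Iic, ← measureReal_def, hcompl,
    probReal_compl_eq_one_sub (hY measurableSet_Iic)]

lemma antitone_toReal_measure_gt : Antitone fun t => (μ {ω | Y ω > t}).toReal :=
  fun _ _ hst => ENNReal.toReal_mono (measure_ne_top μ _)
    (measure_mono fun _ hω => lt_of_le_of_lt hst hω)

lemma continuousWithinAt_toReal_measure_gt (hY : Measurable Y) (x : ℝ) :
    ContinuousWithinAt (fun t => (μ {ω | Y ω > t}).toReal) (Ioi x) x := by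
  simp_rw [toReal_measure_gt_eq_one_sub_cdf μ hY]
  exact (continuousWithinAt_const.sub ((cdf _).right_continuous x)).mono Ioi_subset_Ici_self

lemma tendsto_toReal_measure_gt_atTop (hY : Measurable Y) :
    Tendsto (fun t => (μ {ω | Y ω > t}).toReal) atTop (𝓝 0) := by
  simp_rw [toReal_measure_gt_eq_one_sub_cdf μ hY]
  simpa using (tendsto_cdf_atTop (μ.map Y)).const_sub 1

end Tail

noncomputable def tailInv (H : ℝ → ℝ) (u : ℝ) : ℝ := sInf {x : ℝ | 0 ≤ x ∧ H x ≤ u}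

lemma bddBelow_tailInv_set (H : ℝ → ℝ) (u : ℝ) : BddBelow {x : ℝ | 0 ≤ x ∧ H x ≤ u} :=
  ⟨0, fun _ hx => hx.1⟩

lemma tailInv_nonneg (H : ℝ → ℝ) (u : ℝ) : 0 ≤ tailInv H u := by
  rcases eq_empty_or_nonempty {x : ℝ | 0 ≤ x ∧ H x ≤ u} with h | h
  · simp [tailInv, h]
  · exact le_csInf h fun _ hx => hx.1

section TailInv

variable {H : ℝ → ℝ}

lemma exists_nonneg_le_of_tendsto (hlim : Tendsto H atTop (𝓝 0)) {u : ℝ} (hu : 0 < u) :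
    ∃ x, 0 ≤ x ∧ H x ≤ u :=
  ((eventually_ge_atTop 0).and (hlim.eventually (ge_mem_nhds hu))).exists

lemma tailInv_le_tailInv (hlim : Tendsto H atTop (𝓝 0)) {u v : ℝ} (hu : 0 < u) (huv : u ≤ v) :
    tailInv H v ≤ tailInv H u :=
  csInf_le_csInf (bddBelow_tailInv_set H v) (exists_nonneg_le_of_tendsto hlim hu)
    fun _ hx => ⟨hx.1, hx.2.trans huv⟩

lemma apply_tailInv_le (hH : Antitone H) (hrc : ∀ x, ContinuousWithinAt H (Ioi x) x)
    (hlim : Tendsto H atTop (𝓝 0)) {u : ℝ} (hu : 0 < u) : H (tailInv H u) ≤ u := by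
  refine le_of_tendsto (hrc _) (eventually_nhdsWithin_of_forall fun x hx => ?_)
  obtain ⟨y, hy, hyx⟩ := exists_lt_of_csInf_lt (exists_nonneg_le_of_tendsto hlim hu) hx
  exact (hH hyx.le).trans hy.2

lemma lt_apply_iff_lt_tailInv (hH : Antitone H) (hrc : ∀ x, ContinuousWithinAt H (Ioi x) x)
    (hlim : Tendsto H atTop (𝓝 0)) {u t : ℝ} (hu : 0 < u) (ht : 0 ≤ t) :
    u < H t ↔ t < tailInv H u := by
  constructor
  · intro hut
    by_contra! hle
    exact (hH hle).trans (apply_tailInv_le hH hrc hlim hu) |>.not_gt hut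
  · intro htQ
    by_contra! hle
    exact (csInf_le (bddBelow_tailInv_set H u) ⟨ht, hle⟩).not_gt htQ

lemma volume_restrict_Ioi_setOf_lt_min (hH : Antitone H) (hrc : ∀ x, ContinuousWithinAt H (Ioi x) x)
    (hlim : Tendsto H atTop (𝓝 0)) (a : ℝ) {u : ℝ} (hu : 0 < u) :
    volume.restrict (Ioi 0) {t | u < min a (H t)} =
      (Iio a).indicator (fun u => ENNReal.ofReal (tailInv H u)) u := by
  have hmeas : MeasurableSet {t | u < min a (H t)} :=
    measurableSet_lt measurable_const (measurable_const.min hH.measurable)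
  rw [Measure.restrict_apply hmeas]
  by_cases hua : u < a
  · have : {t | u < min a (H t)} ∩ Ioi 0 = Ioo 0 (tailInv H u) := by
      ext t
      simp only [mem_inter_iff, mem_ofPred_eq, lt_min_iff, mem_Ioi, mem_Ioo, hua, true_and]
      exact ⟨fun h => ⟨h.2, (lt_apply_iff_lt_tailInv hH hrc hlim hu h.2.le).1 h.1⟩,
        fun h => ⟨(lt_apply_iff_lt_tailInv hH hrc hlim hu h.1.le).2 h.2, h.1⟩⟩
    rw [this, Real.volume_Ioo, sub_zero, indicator_of_mem (show u ∈ Iio a from hua)]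
  · have : {t | u < min a (H t)} = ∅ := by
      ext t; simp only [mem_ofPred_eq, lt_min_iff, mem_empty_iff_false, iff_false]; tauto
    rw [this, empty_inter, measure_empty, indicator_of_notMem (show u ∉ Iio a from hua)]

lemma lintegral_sqrt_min_eq (hH : Antitone H) (hrc : ∀ x, ContinuousWithinAt H (Ioi x) x)
    (hlim : Tendsto H atTop (𝓝 0)) {a : ℝ} (ha : 0 ≤ a) :
    ∫⁻ t in Ioi 0, ENNReal.ofReal (min a (H t) ^ (1 / 2 : ℝ)) =
      ENNReal.ofReal (1 / 2) * ∫⁻ u in Ioo 0 a, ENNReal.ofReal (tailInv H u / √u) := by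
  rw [lintegral_rpow_eq_lintegral_meas_lt_mul _
    (ae_of_all _ fun t => le_min ha (hH.le_of_tendsto hlim t))
    (measurable_const.min hH.measurable).aemeasurable one_half_pos]
  congr 1
  calc ∫⁻ u in Ioi 0, volume.restrict (Ioi 0) {t | u < min a (H t)} *
        ENNReal.ofReal (u ^ (1 / 2 - 1 : ℝ))
      = ∫⁻ u in Ioi 0, (Iio a).indicator (fun u => ENNReal.ofReal (tailInv H u / √u)) u := by
        refine setLIntegral_congr_fun measurableSet_Ioi fun u (hu : 0 < u) => ?_
        rw [volume_restrict_Ioi_setOf_lt_min hH hrc hlim a hu]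
        by_cases hua : u ∈ Iio a
        · rw [indicator_of_mem hua, indicator_of_mem hua, ← ENNReal.ofReal_mul
            (tailInv_nonneg H u), div_eq_mul_inv (tailInv H u), Real.sqrt_eq_rpow,
            ← Real.rpow_neg hu.le]
          norm_num
        · rw [indicator_of_notMem hua, indicator_of_notMem hua, zero_mul]
    _ = ∫⁻ u in Ioo 0 a, ENNReal.ofReal (tailInv H u / √u) := by
        rw [lintegral_indicator measurableSet_Iio, Measure.restrict_restrict measurableSet_Iio,
          Iio_inter_Ioi]

lemma integral_min_sqrt_eq (hH : Antitone H) (hrc : ∀ x, ContinuousWithinAt H (Ioi x) x)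
    (hlim : Tendsto H atTop (𝓝 0)) {a : ℝ} (ha : 0 ≤ a) :
    ∫ t in Ioi 0, min (√a) (√(H t)) = 1 / 2 * ∫ u in Ioo 0 a, tailInv H u / √u := by
  have hQ : AEMeasurable (fun u => tailInv H u / √u) (volume.restrict (Ioo 0 a)) :=
    (aemeasurable_restrict_of_antitoneOn measurableSet_Ioo
      fun u hu v _ huv => tailInv_le_tailInv hlim hu.1 huv).div (by fun_prop)
  have hmin : ∀ t, min (√a) (√(H t)) = min a (H t) ^ (1 / 2 : ℝ) := fun t => by
    rw [← Real.sqrt_eq_rpow, Real.sqrt_monotone.map_min]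
  simp_rw [hmin]
  rw [integral_eq_lintegral_of_nonneg_ae
      (ae_of_all _ fun t => Real.rpow_nonneg (le_min ha (hH.le_of_tendsto hlim t)) _)
      ((measurable_const.min hH.measurable).pow_const _).aestronglyMeasurable,
    integral_eq_lintegral_of_nonneg_ae
      (ae_of_all _ fun u => div_nonneg (tailInv_nonneg H u) (Real.sqrt_nonneg u))
      hQ.aestronglyMeasurable,
    lintegral_sqrt_min_eq hH hrc hlim ha, ENNReal.toReal_mul, ENNReal.toReal_ofReal one_half_pos.le]

end TailInv

theorem summable_quantile_integral_iff_summable_min_integral_general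
    {Ω : Type*} [MeasurableSpace Ω] (μ : Measure Ω) [IsProbabilityMeasure μ]
    (Y : Ω → ℝ) (hYmeas : Measurable Y)
    (Q : ℝ → ℝ)
    (hQ : ∀ u, Q u = sInf {x : ℝ | 0 ≤ x ∧ (μ {ω | Y ω > x}).toReal ≤ u})
    (α : ℕ → ℝ) (hα : ∀ k, α k ∈ Icc (0:ℝ) 1) :
    Summable (fun k : ℕ =>
        ((k : ℝ) + 1) ^ (-(1/2) : ℝ) * ∫ u in Ioo (0:ℝ) (α k), Q u / Real.sqrt u) ↔
      Summable (fun k : ℕ =>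
        ((k : ℝ) + 1) ^ (-(1/2) : ℝ) *
          ∫ t in Ioi (0:ℝ),
            min (Real.sqrt (α k)) (Real.sqrt ((μ {ω | Y ω > t}).toReal))) := by
  have hQ' : Q = tailInv fun t => (μ {ω | Y ω > t}).toReal := funext hQ
  have hterm (k : ℕ) : ∫ t in Ioi 0, min (√(α k)) (√(μ {ω | Y ω > t}).toReal) =
      1 / 2 * ∫ u in Ioo 0 (α k), Q u / √u := by
    rw [hQ']
    exact integral_min_sqrt_eq (antitone_toReal_measure_gt μ)
      (continuousWithinAt_toReal_measure_gt μ hYmeas) (tendsto_toReal_measure_gt_atTop μ hYmeas)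
      (hα k).1
  simp_rw [hterm, mul_left_comm _ (1 / 2 : ℝ)]
  exact (summable_mul_left_iff one_half_pos.ne').symm

theorem summable_quantile_integral_iff_summable_min_integral
    {Ω : Type*} [MeasurableSpace Ω] (μ : Measure Ω) [IsProbabilityMeasure μ]
    (Y : Ω → ℝ) (hYpos : ∀ ω, 0 ≤ Y ω) (hYmeas : Measurable Y)
    (hYint : Integrable Y μ)
    (Q : ℝ → ℝ)
    (hQ : ∀ u, Q u = sInf {x : ℝ | 0 ≤ x ∧ (μ {ω | Y ω > x}).toReal ≤ u})
    (α : ℕ → ℝ) (hα : ∀ k, α k ∈ Icc (0:ℝ) 1) :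
    Summable (fun k : ℕ =>
        ((k : ℝ) + 1) ^ (-(1/2) : ℝ) * ∫ u in Ioo (0:ℝ) (α k), Q u / Real.sqrt u) ↔
      Summable (fun k : ℕ =>
        ((k : ℝ) + 1) ^ (-(1/2) : ℝ) *
          ∫ t in Ioi (0:ℝ),
            min (Real.sqrt (α k)) (Real.sqrt ((μ {ω | Y ω > t}).toReal))) :=
  summable_quantile_integral_iff_summable_min_integral_general μ Y hYmeas Q hQ α hα
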